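/- Let P and Q be probability measures on a measurable space Z with P ≪ Q, and let γ > 0. Then the supremum, over all measurable functions g : Z → [0,1], of ∫ g dP − γ ∫ g dQ equals the Hockey-Stick divergence HS_γ(P‖Q) = ∫ max(dP/dQ − γ, 0) dQ, and this supremum is attained by the witness function g*(x) = 1{dP/dQ(x) ≥ γ}. -/

import Mathlib

open MeasureTheory

/-- Hockey-Stick variational representation.
For probability measures `P ≪ Q` on a measurable space `Z` and `γ > 0`, the supremum over
measurable functions `g : Z → [0,1]` of `∫ g dP − γ ∫ g dQ` equals the Hockey-Stick divergence
`HS_γ(P‖Q) = ∫ max(dP/dQ − γ, 0) dQ` (i.e. this value is the greatest element of the set of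
attainable values), and the supremum is attained by the witness `g⋆ = 1{dP/dQ ≥ γ}`. -/
theorem hockey_stick_variational
    {Z : Type*} [MeasurableSpace Z] (P Q : Measure Z)
    [IsProbabilityMeasure P] [IsProbabilityMeasure Q] (hPQ : P ≪ Q)
    (γ : ℝ) (hγ : 0 < γ) :
    IsGreatest
      {v : ℝ | ∃ g : Z → ℝ, Measurable g ∧ (∀ z, g z ∈ Set.Icc (0:ℝ) 1) ∧
        v = (∫ z, g z ∂P) - γ * ∫ z, g z ∂Q}
      (∫ z, max ((P.rnDeriv Q z).toReal - γ) 0 ∂Q) ∧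
    ((∫ z, Set.indicator {z : Z | γ ≤ (P.rnDeriv Q z).toReal} (fun _ => (1:ℝ)) z ∂P)
        - γ * ∫ z, Set.indicator {z : Z | γ ≤ (P.rnDeriv Q z).toReal} (fun _ => (1:ℝ)) z ∂Q
      = ∫ z, max ((P.rnDeriv Q z).toReal - γ) 0 ∂Q) := by
  set f : Z → ℝ := fun z => (P.rnDeriv Q z).toReal with hf
  have hfmeas : Measurable f := (Measure.measurable_rnDeriv P Q).ennreal_toReal
  have hfint : Integrable f Q := Measure.integrable_toReal_rnDeriv
  have hfγint : Integrable (fun z => f z - γ) Q := hfint.sub (integrable_const γ)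
  -- key identity for any bounded measurable g
  have key : ∀ g : Z → ℝ, Measurable g → (∀ z, g z ∈ Set.Icc (0:ℝ) 1) →
      (∫ z, g z ∂P) - γ * ∫ z, g z ∂Q = ∫ z, (f z - γ) * g z ∂Q := by
    intro g hg hb
    have hgintQ : Integrable g Q := by
      refine (integrable_const (1:ℝ)).mono' hg.aestronglyMeasurable ?_
      filter_upwards with z
      rw [Real.norm_eq_abs, abs_le]
      exact ⟨by linarith [(hb z).1], (hb z).2⟩
    have hfgint : Integrable (fun z => f z * g z) Q := by
      refine hfint.mono' (hfmeas.mul hg).aestronglyMeasurable ?_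
      filter_upwards with z
      have h0 : 0 ≤ f z := ENNReal.toReal_nonneg
      rw [Real.norm_eq_abs, abs_mul, abs_of_nonneg h0, abs_of_nonneg (hb z).1]
      nlinarith [(hb z).2]
    have h1 : ∫ z, g z ∂P = ∫ z, f z * g z ∂Q := by
      rw [← integral_rnDeriv_smul hPQ (f := g)]
      simp [hf, smul_eq_mul]
    rw [h1]
    have : ∀ z, (f z - γ) * g z = f z * g z - γ * g z := by intro z; ring
    simp_rw [this]
    rw [integral_sub hfgint (hgintQ.const_mul γ), integral_const_mul]
  have hmaxint : Integrable (fun z => max (f z - γ) 0) Q := hfγint.pos_part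
  constructor
  · constructor
    · -- attained by the witness
      set S : Set Z := {z : Z | γ ≤ f z} with hS
      have hSmeas : MeasurableSet S := measurableSet_le measurable_const hfmeas
      refine ⟨S.indicator (fun _ => (1:ℝ)), measurable_const.indicator hSmeas, ?_, ?_⟩
      · intro z
        by_cases hz : z ∈ S <;> simp [Set.indicator_apply, hz]
      · rw [key _ (measurable_const.indicator hSmeas)
          (by intro z; by_cases hz : z ∈ S <;> simp [Set.indicator_apply, hz])]
        refine (integral_congr_ae ?_).symm
        filter_upwards with z
        by_cases hz : z ∈ S
        · have : γ ≤ f z := hz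
          simp [Set.indicator_apply, hz, hf, max_eq_left (by linarith : (0:ℝ) ≤ f z - γ),
        max_eq_left (by linarith [(this : γ ≤ (P.rnDeriv Q z).toReal)] : (0:ℝ) ≤ (P.rnDeriv Q z).toReal - γ)]
        · have : f z < γ := lt_of_not_ge hz
          simp [Set.indicator_apply, hz, max_eq_right (by linarith : f z - γ ≤ 0),
        (show (P.rnDeriv Q z).toReal ≤ γ from this.le)]
    · -- upper bound
      rintro v ⟨g, hg, hb, rfl⟩
      rw [key g hg hb]
      refine integral_mono ?_ hmaxint ?_
      · refine hfγint.abs.mono' (((hfmeas.sub measurable_const)).mul hg).aestronglyMeasurable ?_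
        filter_upwards with z
        rw [Real.norm_eq_abs, abs_mul]
        nlinarith [(hb z).2, abs_nonneg (f z - γ), abs_of_nonneg (hb z).1, (hb z).1]
      · intro z
        rcases le_or_gt γ (f z) with h | h
        · calc (f z - γ) * g z ≤ (f z - γ) * 1 := by nlinarith [(hb z).2]
            _ ≤ max (f z - γ) 0 := by rw [mul_one]; exact le_max_left _ _
        · have : (f z - γ) * g z ≤ 0 := mul_nonpos_of_nonpos_of_nonneg (by linarith) (hb z).1
          exact this.trans (le_max_right _ _)
  · -- witness equality (same computation)
    rw [key _ (measurable_const.indicator (measurableSet_le measurable_const hfmeas))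
      (by intro z; by_cases hz : z ∈ {z : Z | γ ≤ f z} <;> simp [Set.indicator_apply, hz])]
    refine (integral_congr_ae ?_).symm
    filter_upwards with z
    by_cases hz : z ∈ {z : Z | γ ≤ f z}
    · have : γ ≤ f z := hz
      simp [Set.indicator_apply, hz, max_eq_left (by linarith : (0:ℝ) ≤ f z - γ),
        max_eq_left (by linarith [(this : γ ≤ (P.rnDeriv Q z).toReal)] : (0:ℝ) ≤ (P.rnDeriv Q z).toReal - γ)]
      rfl
    · have : f z < γ := lt_of_not_ge hz
      simp [Set.indicator_apply, hz, max_eq_right (by linarith : f z - γ ≤ 0),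
        (show (P.rnDeriv Q z).toReal ≤ γ from this.le)]
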